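/- arXiv:1612.06725 — 4 statements merged into one kernel-verified Lean document; each statement's English description precedes it below -/
import Mathlib

section
/- Many vertices force a single edge. Let (i_1, …, i_k) be a sequence of indices and consider the cyclic edge sequence {i_1,i_2}, {i_2,i_3}, …, {i_k,i_1} of unordered pairs. If the number of distinct indices satisfies |{i_1, …, i_k}| > 1 + k/2, then there exists an unordered pair {i,j} that occurs exactly once among the k edges of the cyclic edge sequence. -/
/-!
If no edge is single, every edge of the closed walk `i` is traversed at least twice, so it has
at most `k / 2` distinct edges. On the other hand a walk meets at most one new vertex per new
edge, so it has at most one vertex more than it has distinct edges. Together these give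
`|{i_1, …, i_k}| ≤ 1 + k / 2`.
-/

open Finset

theorem Finset.two_mul_card_image_le_card_univ {ι β : Type*} [Fintype ι] [DecidableEq ι]
    [DecidableEq β] (f : ι → β) (hf : ∀ a, ∃ b, f b = f a ∧ b ≠ a) :
    2 * #(univ.image f) ≤ Fintype.card ι := by
  refine mul_card_image_le_card univ 2 fun y hy ↦ ?_
  obtain ⟨a, -, rfl⟩ := mem_image.mp hy
  obtain ⟨b, hfb, hba⟩ := hf a
  calc 2 = #{b, a} := (card_pair hba).symm
    _ ≤ #{c ∈ univ | f c = f a} := card_le_card (by simp [insert_subset_iff, hfb])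

section Walk

variable {α : Type*} [DecidableEq α]

theorem card_image_range_succ_le_card_image_edges_add_one (v : ℕ → α) (n : ℕ) :
    #((range (n + 1)).image v) ≤ #((range n).image fun j ↦ s(v j, v (j + 1))) + 1 := by
  induction n with
  | zero => simp
  | succ n ih =>
    have hverts : (range (n + 2)).image v = insert (v (n + 1)) ((range (n + 1)).image v) := by
      rw [range_add_one, image_insert]
    have hedges : ((range (n + 1)).image fun j ↦ s(v j, v (j + 1))) =
        insert s(v n, v (n + 1)) ((range n).image fun j ↦ s(v j, v (j + 1))) := by
      rw [range_add_one, image_insert]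
    rw [hverts, hedges]
    by_cases hold : v (n + 1) ∈ (range (n + 1)).image v
    · rw [insert_eq_of_mem hold]
      exact ih.trans (by gcongr; exact subset_insert _ _)
    · -- every earlier edge has both endpoints among the earlier vertices
      have hnew : s(v n, v (n + 1)) ∉ (range n).image fun j ↦ s(v j, v (j + 1)) := by
        simp only [mem_image, mem_range, not_exists, not_and]
        intro j hj hedge
        have hmem : v (n + 1) ∈ s(v j, v (j + 1)) := hedge ▸ Sym2.mem_mk_right _ _
        rcases Sym2.mem_iff.mp hmem with h | h
        · exact hold (mem_image.mpr ⟨j, mem_range.mpr (by omega), h.symm⟩)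
        · exact hold (mem_image.mpr ⟨j + 1, mem_range.mpr (by omega), h.symm⟩)
      rw [card_insert_of_notMem hold, card_insert_of_notMem hnew]
      omega

open Fin.NatCast in
theorem card_image_le_card_image_cyclic_edges_add_one {k : ℕ} [NeZero k] (i : Fin k → α) :
    #(univ.image i) ≤ #(univ.image fun l ↦ s(i l, i (l + 1))) + 1 := by
  obtain ⟨n, rfl⟩ : ∃ n, k = n + 1 := Nat.exists_eq_add_one.mpr (NeZero.pos k)
  have hverts : (range (n + 1)).image (fun j : ℕ ↦ i j) = univ.image i := by
    ext x
    simp only [mem_image, mem_range, mem_univ, true_and]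
    exact ⟨fun ⟨j, _, hj⟩ ↦ ⟨_, hj⟩,
      fun ⟨l, hl⟩ ↦ ⟨l, l.isLt, by rw [Fin.cast_val_eq_self, hl]⟩⟩
  have hedges : ((range n).image fun j : ℕ ↦ s(i j, i ↑(j + 1))) ⊆
      univ.image fun l ↦ s(i l, i (l + 1)) := by
    intro e he
    obtain ⟨j, -, rfl⟩ := mem_image.mp he
    exact mem_image.mpr ⟨j, mem_univ _, by rw [Nat.cast_succ]⟩
  calc #(univ.image i) = #((range (n + 1)).image fun j : ℕ ↦ i j) := by rw [hverts]
    _ ≤ #((range n).image fun j : ℕ ↦ s(i j, i ↑(j + 1))) + 1 :=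
      card_image_range_succ_le_card_image_edges_add_one (fun j : ℕ ↦ i j) n
    _ ≤ _ := by gcongr

end Walk

/-- **Many vertices force a single edge.** If `(i_1, …, i_k)` is a sequence of indices whose
number of distinct values exceeds `1 + k/2`, then in the cyclic edge sequence
`{i_1,i_2}, {i_2,i_3}, …, {i_k,i_1}` some unordered pair occurs exactly once. -/
theorem exists_single_edge_of_many_vertices (k : ℕ) [NeZero k] (i : Fin k → ℕ)
    (hcard : 2 + k < 2 * (Finset.univ.image i).card) :
    ∃ l₀ : Fin k, ∀ l : Fin k,
      s(i l, i (l + 1)) = s(i l₀, i (l₀ + 1)) → l = l₀ := by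
  by_contra! hrepeated
  have hedges := two_mul_card_image_le_card_univ (fun l ↦ s(i l, i (l + 1))) hrepeated
  have hverts := card_image_le_card_image_cyclic_edges_add_one i
  rw [Fintype.card_fin] at hedges
  omega
end

section
/- Quantitative count of single edges. Let (i_1, …, i_k) be a sequence of indices and consider the cyclic edge sequence {i_1,i_2}, {i_2,i_3}, …, {i_k,i_1}. If |{i_1, …, i_k}| ≥ 1 + k/2 + s for some s > 0, then there are at least 2s + 2 unordered pairs {i,j} that occur exactly once among the k edges of the cyclic edge sequence. -/
open Finset

/-! Let `V`, `E`, `S` be the vertices, the distinct edges and the single edges of the cyclic edge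
sequence. An edge that is not single occurs at least twice, so `2|E| ≤ k + |S|`. The edges form a
connected graph on `V`, so `|V| ≤ |E| + 1`; in case of equality this graph is a tree, every edge is
a bridge, and a closed walk crosses a bridge an even number of times, so `S = ∅`. Either way
`2|V| ≤ k + max |S| 2`, and for `s > 0` the hypothesis rules out the second alternative. -/

theorem Fin.even_card_filter_ne_add_one {k : ℕ} [NeZero k] (p : Fin k → Bool) :
    Even #{l | p l ≠ p (l + 1)} := by
  let f : Fin k → ZMod 2 := fun l => if p l then 1 else 0
  -- the side of the bridge containing `a` changes exactly where the sequence crosses the bridge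
  have hflip (l : Fin k) : (if p l ≠ p (l + 1) then 1 else 0 : ZMod 2) = f (l + 1) - f l := by
    dsimp only [f]
    cases p l <;> cases p (l + 1) <;> decide
  have hshift : ∑ l, f (l + 1) = ∑ l, f l := Fintype.sum_equiv (Equiv.addRight 1) _ _ fun _ => rfl
  rw [← ZMod.natCast_eq_zero_iff_even, natCast_card_filter, sum_congr rfl fun l _ => hflip l,
    sum_sub_distrib, hshift, sub_self]

section CyclicEdges

variable {β γ : Type*} [DecidableEq β] {k : ℕ} [NeZero k] (g : Fin k → β)

def cyclicEdges : Finset (Sym2 β) := univ.image fun l => s(g l, g (l + 1))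

def edgeMult (e : Sym2 β) : ℕ := #{l | s(g l, g (l + 1)) = e}

def singleEdges : Finset (Sym2 β) := {e ∈ cyclicEdges g | edgeMult g e = 1}

lemma sum_edgeMult : ∑ e ∈ cyclicEdges g, edgeMult g e = k :=
  (card_eq_sum_card_image _ _).symm.trans (card_fin k)

lemma edgeMult_pos {e : Sym2 β} (he : e ∈ cyclicEdges g) : 0 < edgeMult g e := by
  obtain ⟨l, -, rfl⟩ := mem_image.mp he
  exact card_pos.mpr ⟨l, by simp⟩

lemma two_mul_card_cyclicEdges_le : 2 * #(cyclicEdges g) ≤ k + #(singleEdges g) :=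
  calc 2 * #(cyclicEdges g) = ∑ e ∈ cyclicEdges g, 2 := by rw [sum_const, smul_eq_mul, mul_comm]
    _ ≤ ∑ e ∈ cyclicEdges g, (edgeMult g e + if edgeMult g e = 1 then 1 else 0) :=
        sum_le_sum fun e he => by have := edgeMult_pos g he; split <;> omega
    _ = k + #(singleEdges g) := by rw [sum_add_distrib, sum_edgeMult, singleEdges, card_filter]

lemma cyclicEdges_comp [DecidableEq γ] (φ : β → γ) :
    cyclicEdges (φ ∘ g) = (cyclicEdges g).image (Sym2.map φ) := by
  simp [cyclicEdges, image_image, Function.comp_def]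

lemma edgeMult_comp_map [DecidableEq γ] {φ : β → γ} (hφ : φ.Injective) (e : Sym2 β) :
    edgeMult (φ ∘ g) (e.map φ) = edgeMult g e := by
  refine congrArg card (filter_congr fun l _ => ?_)
  rw [Function.comp_apply, Function.comp_apply, ← Sym2.map_mk, (Sym2.map.injective hφ).eq_iff]

lemma card_singleEdges_comp [DecidableEq γ] {φ : β → γ} (hφ : φ.Injective) :
    #(singleEdges (φ ∘ g)) = #(singleEdges g) := by
  rw [singleEdges, cyclicEdges_comp, filter_image]
  simp only [edgeMult_comp_map g hφ]
  exact card_image_of_injective _ (Sym2.map.injective hφ)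

def cyclicEdgeGraph : SimpleGraph β := SimpleGraph.fromEdgeSet (cyclicEdges g)

lemma cyclicEdgeGraph_reachable_add_one (l : Fin k) :
    (cyclicEdgeGraph g).Reachable (g l) (g (l + 1)) := by
  by_cases h : g l = g (l + 1)
  · rw [h]
  · exact SimpleGraph.Adj.reachable ⟨mem_image_of_mem _ (mem_univ l), h⟩

lemma cyclicEdgeGraph_reachable_zero (l : Fin k) : (cyclicEdgeGraph g).Reachable (g 0) (g l) := by
  obtain ⟨n, rfl⟩ := Nat.exists_eq_succ_of_ne_zero (NeZero.ne k)
  induction l using Fin.induction with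
  | zero => rfl
  | succ l ih => rw [← Fin.coeSucc_eq_succ]; exact ih.trans (cyclicEdgeGraph_reachable_add_one g _)

lemma cyclicEdgeGraph_connected (hg : g.Surjective) : (cyclicEdgeGraph g).Connected :=
  (cyclicEdgeGraph g).connected_iff_exists_forall_reachable.mpr
    ⟨g 0, fun v => by obtain ⟨l, rfl⟩ := hg v; exact cyclicEdgeGraph_reachable_zero g l⟩

lemma edgeSet_cyclicEdgeGraph_subset : (cyclicEdgeGraph g).edgeSet ⊆ cyclicEdges g := by
  rw [cyclicEdgeGraph, SimpleGraph.edgeSet_fromEdgeSet]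
  exact Set.sdiff_subset

lemma card_edgeSet_cyclicEdgeGraph_le :
    Nat.card (cyclicEdgeGraph g).edgeSet ≤ #(cyclicEdges g) := by
  rw [Nat.card_coe_set_eq, ← Set.ncard_coe_finset]
  exact Set.ncard_le_ncard (edgeSet_cyclicEdgeGraph_subset g)

lemma card_le_card_cyclicEdges_add_one [Finite β] (hg : g.Surjective) :
    Nat.card β ≤ #(cyclicEdges g) + 1 :=
  (cyclicEdgeGraph_connected g hg).card_vert_le_card_edgeSet_add_one.trans
    (by have := card_edgeSet_cyclicEdgeGraph_le g; omega)

lemma isBridge_of_card_eq [Finite β] (hg : g.Surjective)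
    (hcard : Nat.card β = #(cyclicEdges g) + 1) {e : Sym2 β} (he : e ∈ cyclicEdges g) :
    (cyclicEdgeGraph g).IsBridge e := by
  have hconn := cyclicEdgeGraph_connected g hg
  have hle := card_edgeSet_cyclicEdgeGraph_le g
  have hge := hconn.card_vert_le_card_edgeSet_add_one
  have htree : (cyclicEdgeGraph g).IsTree :=
    SimpleGraph.isTree_iff_connected_and_card.mpr ⟨hconn, by omega⟩
  have heq : (cyclicEdgeGraph g).edgeSet = cyclicEdges g :=
    Set.eq_of_subset_of_ncard_le (edgeSet_cyclicEdgeGraph_subset g)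
      (by rw [Set.ncard_coe_finset, ← Nat.card_coe_set_eq]; omega)
  exact SimpleGraph.isAcyclic_iff_forall_isBridge.mp htree.isAcyclic (heq ▸ he)

lemma even_edgeMult_of_isBridge {e : Sym2 β} (hb : (cyclicEdgeGraph g).IsBridge e) :
    Even (edgeMult g e) := by
  classical
  induction e using Sym2.ind with | h a b =>
  set H := (cyclicEdgeGraph g).deleteEdges {s(a, b)}
  have hab : ¬ H.Reachable a b := SimpleGraph.isBridge_iff.mp hb
  -- the side of the bridge containing `a` changes exactly where the sequence crosses the bridge
  have hflip (l : Fin k) : s(g l, g (l + 1)) = s(a, b) ↔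
      decide (H.Reachable a (g l)) ≠ decide (H.Reachable a (g (l + 1))) := by
    constructor
    · intro h
      rcases Sym2.eq_iff.mp h with ⟨h1, h2⟩ | ⟨h1, h2⟩ <;> simp [h1, h2, hab]
    · intro h
      by_contra hne
      have hstep : H.Reachable (g l) (g (l + 1)) := by
        by_cases heq : g l = g (l + 1)
        · rw [heq]
        · exact SimpleGraph.Adj.reachable
            (SimpleGraph.deleteEdges_adj.mpr ⟨⟨mem_image_of_mem _ (mem_univ l), heq⟩, hne⟩)
      exact h (decide_eq_decide.mpr ⟨fun hr => hr.trans hstep, fun hr => hr.trans hstep.symm⟩)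
  rw [edgeMult, filter_congr fun l _ => hflip l]
  exact Fin.even_card_filter_ne_add_one _

theorem two_mul_natCard_le_of_surjective [Finite β] (hg : g.Surjective) :
    2 * Nat.card β ≤ k + max #(singleEdges g) 2 := by
  have hV := card_le_card_cyclicEdges_add_one g hg
  have hE := two_mul_card_cyclicEdges_le g
  rcases hV.lt_or_eq with hlt | htree
  · omega
  · have hS : singleEdges g = ∅ := filter_eq_empty_iff.mpr fun e he h1 => by
      simpa [h1] using even_edgeMult_of_isBridge g (isBridge_of_card_eq g hg htree he)
    rw [hS, card_empty] at hE
    omega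

theorem two_mul_card_image_le : 2 * #(univ.image g) ≤ k + max #(singleEdges g) 2 := by
  let g' : Fin k → univ.image g := fun l => ⟨g l, mem_image_of_mem g (mem_univ l)⟩
  have hg' : g'.Surjective := by
    rintro ⟨_, hv⟩
    obtain ⟨l, -, rfl⟩ := mem_image.mp hv
    exact ⟨l, rfl⟩
  have hS : #(singleEdges g) = #(singleEdges g') := card_singleEdges_comp g' Subtype.val_injective
  rw [hS, ← Fintype.card_coe, ← Nat.card_eq_fintype_card]
  exact two_mul_natCard_le_of_surjective g' hg'

end CyclicEdges

/-- **Quantitative count of single edges.** If the number of distinct values of a sequence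
`(i_1, …, i_k)` satisfies `|{i_1, …, i_k}| ≥ 1 + k/2 + s` for some `s > 0`, then at least
`2s + 2` unordered pairs occur exactly once among the `k` edges of the cyclic edge sequence
`{i_1,i_2}, {i_2,i_3}, …, {i_k,i_1}`. -/
theorem single_edge_count_of_many_vertices (k : ℕ) [NeZero k] (i : Fin k → ℕ)
    (s : ℕ) (hs : 0 < s)
    (hcard : 2 + k + 2 * s ≤ 2 * (Finset.univ.image i).card) :
    2 * s + 2 ≤
      (((Finset.univ : Finset (Fin k)).image fun l => s(i l, i (l + 1))).filter
        fun e => ((Finset.univ : Finset (Fin k)).filter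
          fun l => s(i l, i (l + 1)) = e).card = 1).card := by
  have := two_mul_card_image_le i
  change 2 * s + 2 ≤ #(singleEdges i)
  omega
end

section
/- Law of large numbers for Curie-Weiss variables. Let ξ_1, …, ξ_M be P_β^M-distributed Curie-Weiss random variables. Then the mean (1/M) Σ_{i=1}^M ξ_i converges in distribution as M → ∞, namely to the Dirac measure δ_0 if β ≤ 1, and to the measure (1/2)(δ_{−m(β)} + δ_{m(β)}) if β > 1, where m(β) is the unique strictly positive solution of tanh(βm) = m. -/
open MeasureTheory ProbabilityTheory Filter
open scoped BoundedContinuousFunction ENNReal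

/-- The unnormalized Curie-Weiss weight `exp((β/(2M)) (∑ x_i)²)` of a spin
configuration `x ∈ {-1,1}^M`. -/
noncomputable def cwWeight (β : ℝ) (M : ℕ) (x : Fin M → ℝ) : ℝ :=
  Real.exp (β / (2 * M) * (∑ i, x i) ^ 2)

/-- The Curie-Weiss partition function `Z_{β,M}`. -/
noncomputable def cwZ (β : ℝ) (M : ℕ) : ℝ :=
  ∑ x ∈ Fintype.piFinset (fun _ : Fin M => ({-1, 1} : Finset ℝ)), cwWeight β M x

/-- The Curie-Weiss measure `P_β^M` on spin configurations in `{-1,1}^M ⊆ ℝ^M`: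
`P_β^M({x}) = Z⁻¹ exp((β/(2M)) (∑ x_i)²)`. -/
noncomputable def curieWeiss (β : ℝ) (M : ℕ) : Measure (Fin M → ℝ) :=
  ∑ x ∈ Fintype.piFinset (fun _ : Fin M => ({-1, 1} : Finset ℝ)),
    ENNReal.ofReal (cwWeight β M x / cwZ β M) • Measure.dirac x

/-!
Grouping configurations by their number `k` of up spins, the mean spin is `tₖ = 2k/M - 1` with
probability proportional to `C(M,k) exp(M β tₖ² / 2)`. A single term of the binomial expansion
of `(p + (1 - p))^M` gives `C(M,k) ≤ exp(M H(k/M))` (`H` the binary entropy), and Jensen's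
inequality for `exp` against the binomial weights with `p = (1 + a)/2` gives `Z ≥ exp(M φ(a))`
for every `a ∈ (-1,1)`, where `φ(t) = β t² / 2 + H((1 + t)/2)`. Hence, if `a ≥ 0` is the unique
maximiser of the even function `φ` on `[0,1]`, the probability that `|tₖ|` stays `ε` away from
`a` decays exponentially in `M`, and the reflection `k ↦ M - k` splits the remaining mass evenly
between `±a`. Since `φ'(t) = β t - artanh t` and `artanh t / t` increases strictly from `1` on
`(0,1)`, the maximiser is `0` for `β ≤ 1` and the positive solution `m` of `tanh(β m) = m` for
`β > 1`.
-/

open Real Topology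

section

open Set

namespace Real

theorem hasDerivAt_artanh {x : ℝ} (hx : x ∈ Ioo (-1) 1) :
    HasDerivAt artanh (1 - x ^ 2)⁻¹ x := by
  obtain ⟨hx₁, hx₂⟩ := hx
  have hlog : HasDerivAt (fun y => (log (1 + y) - log (1 - y)) / 2)
      (((1 + x)⁻¹ - -(1 - x)⁻¹) / 2) x := by
    refine (((hasDerivAt_id x).const_add 1).log ?_ |>.sub
      (((hasDerivAt_id x).const_sub 1).log ?_)).div_const 2 |>.congr_deriv ?_
    · exact (by linarith : (0 : ℝ) < 1 + x).ne'
    · exact (by linarith : (0 : ℝ) < 1 - x).ne'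
    · simp [div_eq_mul_inv]
  have heq : (fun y => (log (1 + y) - log (1 - y)) / 2) =ᶠ[𝓝 x] artanh := by
    filter_upwards [Ioo_mem_nhds hx₁ hx₂] with y hy
    rw [artanh_eq_half_log (Ioo_subset_Icc_self hy),
      log_div (by linarith [hy.1]) (by linarith [hy.2])]
    ring
  refine (hlog.congr_of_eventuallyEq heq.symm).congr_deriv ?_
  have h₁ : 1 + x ≠ 0 := by linarith
  have h₂ : 1 - x ≠ 0 := by linarith
  rw [show 1 - x ^ 2 = (1 + x) * (1 - x) by ring]
  field_simp
  ring

theorem strictConvexOn_artanh : StrictConvexOn ℝ (Ico 0 1) artanh := by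
  have hderiv : ∀ x ∈ Ioo (-1 : ℝ) 1, deriv artanh x = (1 - x ^ 2)⁻¹ :=
    fun x hx => (hasDerivAt_artanh hx).deriv
  refine StrictMonoOn.strictConvexOn_of_deriv (convex_Ico 0 1) (fun x hx =>
    (hasDerivAt_artanh ⟨by linarith [hx.1], hx.2⟩).continuousAt.continuousWithinAt) ?_
  rw [interior_Ico]
  intro x hx y hy hxy
  rw [hderiv x ⟨by linarith [hx.1], hx.2⟩, hderiv y ⟨by linarith [hy.1], hy.2⟩]
  apply inv_strictAnti₀ <;> nlinarith [hx.1, hy.2]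

theorem lt_artanh {x : ℝ} (hx : x ∈ Ioo 0 1) : x < artanh x := by
  have h := strictConvexOn_artanh.lt_slope_of_hasDerivAt ⟨le_rfl, one_pos⟩
    (Ioo_subset_Ico_self hx) hx.1 (hasDerivAt_artanh ⟨by norm_num, by norm_num⟩)
  rw [slope_def_field, artanh_zero, sub_zero, sub_zero, lt_div_iff₀ hx.1] at h
  simpa using h

theorem strictMonoOn_artanh_div : StrictMonoOn (fun x => artanh x / x) (Ioo 0 1) := by
  intro x hx y hy hxy
  simpa [artanh_zero] using strictConvexOn_artanh.secant_strict_mono ⟨le_rfl, one_pos⟩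
    (Ioo_subset_Ico_self hx) (Ioo_subset_Ico_self hy) hx.1.ne' hy.1.ne' hxy

theorem tendsto_artanh_div_nhdsGT_zero :
    Tendsto (fun x => artanh x / x) (𝓝[>] 0) (𝓝 1) := by
  have := (hasDerivAt_artanh (x := 0) ⟨by norm_num, by norm_num⟩).tendsto_slope_zero_right
  simpa [artanh_zero, div_eq_inv_mul] using this

theorem tanh_mul_eq_self_iff {β m : ℝ} (hm : m ∈ Ioo (-1) 1) :
    tanh (β * m) = m ↔ artanh m = β * m :=
  ⟨fun h => by simpa [h] using artanh_tanh (β * m), fun h => by rw [← h, tanh_artanh hm]⟩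

@[fun_prop]
theorem continuous_tanh : Continuous tanh := by
  rw [show tanh = fun x => sinh x / cosh x from funext tanh_eq_sinh_div_cosh]
  exact continuous_sinh.div continuous_cosh fun x => (cosh_pos x).ne'

theorem exists_tanh_mul_eq_self {β : ℝ} (hβ : 1 < β) : ∃ m ∈ Ioo 0 1, tanh (β * m) = m := by
  obtain ⟨δ, hδβ, hδ⟩ := ((tendsto_artanh_div_nhdsGT_zero.eventually (gt_mem_nhds hβ)).and
    (Ioo_mem_nhdsGT one_pos)).exists
  have hδ_lt : δ < tanh (β * δ) := by
    by_contra! h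
    have := artanh_le_artanh (neg_one_lt_tanh _) hδ.2 h
    rw [artanh_tanh] at this
    rw [div_lt_iff₀ hδ.1] at hδβ
    linarith
  have hcont : Continuous fun m => tanh (β * m) - m := by fun_prop
  obtain ⟨m, hm, hm0⟩ := intermediate_value_Ioo' hδ.2.le hcont.continuousOn
    ⟨sub_neg.2 (tanh_lt_one _), sub_pos.2 hδ_lt⟩
  exact ⟨m, ⟨hδ.1.trans hm.1, hm.2⟩, sub_eq_zero.1 hm0⟩

theorem existsUnique_pos_tanh_mul_eq_self {β : ℝ} (hβ : 1 < β) :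
    ∃! m : ℝ, 0 < m ∧ tanh (β * m) = m := by
  obtain ⟨m, hm, hfix⟩ := exists_tanh_mul_eq_self hβ
  have hslope : ∀ m', 0 < m' → tanh (β * m') = m' → m' ∈ Ioo 0 1 ∧ artanh m' / m' = β :=
    fun m' hm' hfix' => by
      have hm'1 : m' < 1 := hfix' ▸ tanh_lt_one _
      refine ⟨⟨hm', hm'1⟩, ?_⟩
      rw [(tanh_mul_eq_self_iff ⟨by linarith, hm'1⟩).1 hfix', mul_div_cancel_right₀ _ hm'.ne']
  refine ⟨m, ⟨hm.1, hfix⟩, fun m' ⟨hm', hfix'⟩ => ?_⟩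
  obtain ⟨hm'I, hm'β⟩ := hslope m' hm' hfix'
  obtain ⟨hmI, hmβ⟩ := hslope m hm.1 hfix
  exact strictMonoOn_artanh_div.injOn hm'I hmI (hm'β.trans hmβ.symm)

end Real

theorem apply_lt_of_deriv_pos_of_deriv_neg {f : ℝ → ℝ} {l a u t : ℝ} (ha : a ∈ Icc l u)
    (hf : ContinuousOn f (Icc l u)) (hpos : ∀ x ∈ Ioo l a, 0 < deriv f x)
    (hneg : ∀ x ∈ Ioo a u, deriv f x < 0) (ht : t ∈ Icc l u) (hta : t ≠ a) : f t < f a := by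
  rcases hta.lt_or_gt with h | h
  · exact strictMonoOn_of_deriv_pos (convex_Icc l a) (hf.mono (Icc_subset_Icc_right ha.2))
      (by rwa [interior_Icc]) ⟨ht.1, h.le⟩ ⟨ha.1, le_rfl⟩ h
  · exact strictAntiOn_of_deriv_neg (convex_Icc a u) (hf.mono (Icc_subset_Icc_left ha.1))
      (by rwa [interior_Icc]) ⟨le_rfl, ha.2⟩ ⟨h.le, ht.2⟩ h

namespace CurieWeiss

noncomputable def freeEnergy (β t : ℝ) : ℝ := β * t ^ 2 / 2 + binEntropy ((1 + t) / 2)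

@[fun_prop]
theorem continuous_freeEnergy (β : ℝ) : Continuous (freeEnergy β) := by
  unfold freeEnergy; fun_prop

theorem freeEnergy_neg (β t : ℝ) : freeEnergy β (-t) = freeEnergy β t := by
  rw [freeEnergy, freeEnergy, neg_sq, ← binEntropy_one_sub]
  ring_nf

theorem freeEnergy_abs (β t : ℝ) : freeEnergy β |t| = freeEnergy β t := by
  rcases abs_choice t with h | h <;> simp [h, freeEnergy_neg]

theorem hasDerivAt_freeEnergy (β : ℝ) {t : ℝ} (ht : t ∈ Ioo (-1) 1) :
    HasDerivAt (freeEnergy β) (β * t - artanh t) t := by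
  obtain ⟨ht₁, ht₂⟩ := ht
  have hH := (hasDerivAt_binEntropy (p := (1 + t) / 2) (by linarith) (by linarith)).comp t
    (((hasDerivAt_id t).const_add 1).div_const 2)
  refine (((hasDerivAt_pow 2 t).const_mul β).div_const 2).add hH |>.congr_deriv ?_
  rw [artanh_eq_half_log ⟨ht₁.le, ht₂.le⟩, show 1 - (1 + t) / 2 = (1 - t) / 2 by ring,
    log_div (x := 1 + t) (y := 1 - t) (by linarith) (by linarith),
    log_div (by linarith) two_ne_zero, log_div (by linarith) two_ne_zero]
  norm_num
  ring

theorem freeEnergy_lt_freeEnergy_zero {β t : ℝ} (hβ : β ≤ 1) (ht : t ∈ Icc 0 1)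
    (ht0 : t ≠ 0) : freeEnergy β t < freeEnergy β 0 := by
  refine apply_lt_of_deriv_pos_of_deriv_neg ⟨le_rfl, zero_le_one⟩
    (continuous_freeEnergy β).continuousOn (by simp) (fun x hx => ?_) ht ht0
  rw [(hasDerivAt_freeEnergy β ⟨by linarith [hx.1], hx.2⟩).deriv]
  nlinarith [lt_artanh hx, hx.1]

theorem freeEnergy_lt_freeEnergy_of_artanh_eq {β m t : ℝ} (hm : m ∈ Ioo 0 1)
    (hfix : artanh m = β * m) (ht : t ∈ Icc 0 1) (htm : t ≠ m) :
    freeEnergy β t < freeEnergy β m := by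
  have hβ : artanh m / m = β := by rw [hfix, mul_div_cancel_right₀ _ hm.1.ne']
  refine apply_lt_of_deriv_pos_of_deriv_neg (Ioo_subset_Icc_self hm)
    (continuous_freeEnergy β).continuousOn (fun x hx => ?_) (fun x hx => ?_) ht htm
  · have hxI : x ∈ Ioo (0 : ℝ) 1 := ⟨hx.1, hx.2.trans hm.2⟩
    have : artanh x / x < artanh m / m := strictMonoOn_artanh_div hxI hm hx.2
    rw [hβ, div_lt_iff₀ hx.1] at this
    rw [(hasDerivAt_freeEnergy β ⟨by linarith [hx.1], hxI.2⟩).deriv]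
    linarith
  · have hxI : x ∈ Ioo (0 : ℝ) 1 := ⟨hm.1.trans hx.1, hx.2⟩
    have : artanh m / m < artanh x / x := strictMonoOn_artanh_div hm hxI hx.1
    rw [hβ, lt_div_iff₀ hxI.1] at this
    rw [(hasDerivAt_freeEnergy β ⟨by linarith [hxI.1], hx.2⟩).deriv]
    linarith

end CurieWeiss

end

open Finset

namespace bernsteinPolynomial

open Polynomial

theorem eval_eq (M k : ℕ) (p : ℝ) :
    (bernsteinPolynomial ℝ M k).eval p = M.choose k * p ^ k * (1 - p) ^ (M - k) := by
  simp [bernsteinPolynomial]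

theorem eval_nonneg (M k : ℕ) {p : ℝ} (hp : p ∈ Set.Icc 0 1) :
    0 ≤ (bernsteinPolynomial ℝ M k).eval p := by
  obtain ⟨hp₀, hp₁⟩ := hp
  rw [eval_eq]
  have : 0 ≤ 1 - p := sub_nonneg.2 hp₁
  positivity

theorem sum_eval (M : ℕ) (p : ℝ) :
    ∑ k ∈ range (M + 1), (bernsteinPolynomial ℝ M k).eval p = 1 := by
  simpa [eval_finsetSum] using congrArg (eval p) (bernsteinPolynomial.sum ℝ M)

theorem sum_eval_mul (M : ℕ) (p : ℝ) :
    ∑ k ∈ range (M + 1), (bernsteinPolynomial ℝ M k).eval p * k = M * p := by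
  simpa [eval_finsetSum, mul_comm] using congrArg (eval p) (bernsteinPolynomial.sum_smul ℝ M)

end bernsteinPolynomial

theorem pow_mul_one_sub_pow_eq_exp {M k : ℕ} (hk : k ≤ M) {p : ℝ} (hp : p ∈ Set.Ioo 0 1) :
    p ^ k * (1 - p) ^ (M - k) = exp (k * log p + (M - k) * log (1 - p)) := by
  rw [exp_add, ← Nat.cast_sub hk, exp_nat_mul, exp_nat_mul, exp_log hp.1,
    exp_log (sub_pos.2 hp.2)]

theorem Nat.choose_le_exp_mul_binEntropy (M k : ℕ) :
    (M.choose k : ℝ) ≤ exp (M * binEntropy (k / M)) := by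
  rcases lt_or_ge M k with hMk | hkM
  · simp [Nat.choose_eq_zero_of_lt hMk, (exp_pos _).le]
  obtain rfl | hk0 := k.eq_zero_or_pos
  · simp
  obtain rfl | hkM := hkM.eq_or_lt
  · simp [div_self (Nat.cast_pos.2 hk0 : (0 : ℝ) < k).ne']
  have hM : (0 : ℝ) < M := by exact_mod_cast hk0.trans hkM
  set p : ℝ := k / M with hp_def
  have hp : p ∈ Set.Ioo 0 1 := ⟨by positivity, (div_lt_one hM).2 (by exact_mod_cast hkM)⟩
  have hterm : (bernsteinPolynomial ℝ M k).eval p ≤ 1 :=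
    bernsteinPolynomial.sum_eval M p ▸ single_le_sum
      (fun j _ => bernsteinPolynomial.eval_nonneg M j (Set.Ioo_subset_Icc_self hp))
      (mem_range.2 (by omega))
  have hentropy : k * Real.log p + (M - k) * Real.log (1 - p) = -(M * binEntropy p) := by
    rw [binEntropy, Real.log_inv, Real.log_inv, hp_def]
    field_simp
    ring
  rwa [bernsteinPolynomial.eval_eq, mul_assoc, pow_mul_one_sub_pow_eq_exp hkM.le hp, hentropy,
    exp_neg, ← div_eq_mul_inv, div_le_one (exp_pos _)] at hterm

theorem abs_sum_mul_sub_le {ι X : Type*} [PseudoMetricSpace X] {s : Finset ι} {p : ι → ℝ}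
    {x : ι → X} {a : X} {f : X → ℝ} {C δ η : ℝ} (hp0 : ∀ i ∈ s, 0 ≤ p i)
    (hp1 : ∑ i ∈ s, p i = 1) (hC : ∀ y, |f y| ≤ C) (hη : 0 ≤ η)
    (hδ : ∀ y, dist y a < δ → |f y - f a| ≤ η) :
    |∑ i ∈ s, p i * f (x i) - f a| ≤ η + 2 * C * ∑ i ∈ s with δ ≤ dist (x i) a, p i := by
  have hfar : ∀ i ∈ {i ∈ s | δ ≤ dist (x i) a}, p i * |f (x i) - f a| ≤ 2 * C * p i :=
    fun i hi => by
      have := (abs_sub _ _).trans (add_le_add (hC (x i)) (hC a))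
      nlinarith [hp0 i (mem_filter.1 hi).1]
  have hnear : ∀ i ∈ {i ∈ s | ¬δ ≤ dist (x i) a}, p i * |f (x i) - f a| ≤ η * p i :=
    fun i hi => by
      rw [mem_filter, not_le] at hi
      nlinarith [hp0 i hi.1, hδ (x i) hi.2]
  have hnear_mass : ∑ i ∈ s with ¬δ ≤ dist (x i) a, p i ≤ 1 :=
    hp1 ▸ sum_le_sum_of_subset_of_nonneg (filter_subset _ _) fun i hi _ => hp0 i hi
  calc |∑ i ∈ s, p i * f (x i) - f a|
      = |∑ i ∈ s, p i * (f (x i) - f a)| := by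
        simp only [mul_sub, sum_sub_distrib, ← sum_mul, hp1, one_mul]
    _ ≤ ∑ i ∈ s, p i * |f (x i) - f a| := by
        refine (abs_sum_le_sum_abs _ _).trans_eq (sum_congr rfl fun i hi => ?_)
        rw [abs_mul, abs_of_nonneg (hp0 i hi)]
    _ = ∑ i ∈ s with δ ≤ dist (x i) a, p i * |f (x i) - f a|
        + ∑ i ∈ s with ¬δ ≤ dist (x i) a, p i * |f (x i) - f a| :=
        (sum_filter_add_sum_filter_not _ _ _).symm
    _ ≤ 2 * C * ∑ i ∈ s with δ ≤ dist (x i) a, p i + η * 1 := by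
        rw [mul_sum]
        refine add_le_add (sum_le_sum hfar) ((sum_le_sum hnear).trans ?_)
        rw [← mul_sum]
        exact mul_le_mul_of_nonneg_left hnear_mass hη
    _ = η + 2 * C * ∑ i ∈ s with δ ≤ dist (x i) a, p i := by ring

theorem tendsto_sum_mul_of_tendsto_sum_far {ι X γ : Type*} [PseudoMetricSpace X]
    {l : Filter γ} {s : γ → Finset ι} {p : γ → ι → ℝ} {x : γ → ι → X} {a : X} {f : X → ℝ}
    {C : ℝ} (hp0 : ∀ n, ∀ i ∈ s n, 0 ≤ p n i) (hp1 : ∀ n, ∑ i ∈ s n, p n i = 1)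
    (hfar : ∀ ε > 0, Tendsto (fun n => ∑ i ∈ s n with ε ≤ dist (x n i) a, p n i) l (𝓝 0))
    (hf : ContinuousAt f a) (hC : ∀ y, |f y| ≤ C) :
    Tendsto (fun n => ∑ i ∈ s n, p n i * f (x n i)) l (𝓝 (f a)) := by
  rw [Metric.tendsto_nhds]
  intro η hη
  obtain ⟨δ, hδ, hfδ⟩ := Metric.continuousAt_iff.1 hf (η / 2) (half_pos hη)
  have hbound : Tendsto (fun n => η / 2 + 2 * C * ∑ i ∈ s n with δ ≤ dist (x n i) a, p n i) l
      (𝓝 (η / 2)) := by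
    simpa using ((hfar δ hδ).const_mul (2 * C)).const_add (η / 2)
  filter_upwards [hbound.eventually (gt_mem_nhds (half_lt_self hη))] with n hn
  rw [Real.dist_eq]
  exact (abs_sum_mul_sub_le (hp0 n) (hp1 n) hC (half_pos hη).le
    fun y hy => (hfδ hy).le).trans_lt hn

theorem tendsto_natCast_add_one_mul_exp_neg_mul {δ : ℝ} (hδ : 0 < δ) :
    Tendsto (fun n : ℕ => ((n : ℝ) + 1) * exp (-(n * δ))) atTop (𝓝 0) := by
  have hr : exp (-δ) < 1 := exp_lt_one_iff.2 (neg_neg_of_pos hδ)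
  have h := (tendsto_self_mul_const_pow_of_lt_one (exp_pos _).le hr).add
    (tendsto_pow_atTop_nhds_zero_of_lt_one (exp_pos _).le hr)
  rw [zero_add] at h
  refine h.congr fun n => ?_
  rw [← exp_nat_mul]
  ring_nf

theorem sum_ite_mem_one_neg_one {M : ℕ} (S : Finset (Fin M)) :
    ∑ i, (if i ∈ S then (1 : ℝ) else -1) = 2 * #S - M := by
  have h : ∀ i, (if i ∈ S then (1 : ℝ) else -1) = 2 * (if i ∈ S then 1 else 0) - 1 := by
    intro i; split_ifs <;> norm_num
  simp [h, sum_sub_distrib, mul_comm]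

theorem sum_piFinset_pm_one {α : Type*} [AddCommMonoid α] (M : ℕ) (F : ℝ → α) :
    ∑ x ∈ Fintype.piFinset (fun _ : Fin M => ({-1, 1} : Finset ℝ)), F (∑ i, x i) =
      ∑ k ∈ range (M + 1), M.choose k • F (2 * k - M) := by
  have hpm : ∀ x ∈ Fintype.piFinset (fun _ : Fin M => ({-1, 1} : Finset ℝ)),
      (fun i => if x i = 1 then 1 else -1) = x := by
    intro x hx
    funext i
    have := Fintype.mem_piFinset.1 hx i
    simp only [Finset.mem_insert, Finset.mem_singleton] at this
    rcases this with h | h <;> norm_num [h]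
  calc ∑ x ∈ Fintype.piFinset (fun _ : Fin M => ({-1, 1} : Finset ℝ)), F (∑ i, x i)
      = ∑ S ∈ (univ : Finset (Fin M)).powerset, F (∑ i, if i ∈ S then (1 : ℝ) else -1) := by
        refine sum_nbij' (fun x => univ.filter (x · = 1)) (fun S i => if i ∈ S then 1 else -1)
          (by simp) (fun S _ => Fintype.mem_piFinset.2 fun i => by split_ifs <;> simp)
          (fun x hx => by simpa using hpm x hx) (fun S _ => ?_) (fun x hx => ?_)
        · ext i
          by_cases h : i ∈ S <;> norm_num [h]
        · simp only [Finset.mem_filter, Finset.mem_univ, true_and]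
          rw [hpm x hx]
    _ = ∑ k ∈ range (M + 1), M.choose k • F (2 * k - M) := by
        simp_rw [sum_ite_mem_one_neg_one]
        simpa using sum_powerset_apply_card (fun k : ℕ => F (2 * k - M))
          (x := (univ : Finset (Fin M)))

namespace CurieWeiss

noncomputable def magnetization (M k : ℕ) : ℝ := (M : ℝ)⁻¹ * (2 * k - M)

noncomputable def upWeight (β : ℝ) (M k : ℕ) : ℝ :=
  M.choose k * exp (β / (2 * M) * (2 * k - M) ^ 2)

noncomputable def upProb (β : ℝ) (M k : ℕ) : ℝ := upWeight β M k / cwZ β M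

theorem magnetization_mem_Icc {M k : ℕ} (hk : k ≤ M) :
    magnetization M k ∈ Set.Icc (-1) 1 := by
  obtain rfl | hM := M.eq_zero_or_pos
  · simp [magnetization]
  have hM' : (0 : ℝ) < M := by exact_mod_cast hM
  have hk' : (k : ℝ) ≤ M := by exact_mod_cast hk
  rw [magnetization, inv_mul_eq_div, Set.mem_Icc, le_div_iff₀ hM', div_le_iff₀ hM']
  constructor <;> linarith [(Nat.cast_nonneg k : (0 : ℝ) ≤ k)]

theorem magnetization_reflect {M k : ℕ} (hk : k ≤ M) :
    magnetization M (M - k) = -magnetization M k := by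
  rw [magnetization, magnetization, Nat.cast_sub hk]
  ring

theorem mul_freeEnergy_magnetization (β : ℝ) {M : ℕ} (hM : 0 < M) (k : ℕ) :
    M * freeEnergy β (magnetization M k) =
      M * binEntropy (k / M) + β / (2 * M) * (2 * k - M) ^ 2 := by
  have hM' : (M : ℝ) ≠ 0 := by positivity
  have hp : (1 + magnetization M k) / 2 = k / M := by
    rw [magnetization]; field_simp; ring
  rw [freeEnergy, hp, magnetization]
  field_simp
  ring

theorem upWeight_pos (β : ℝ) {M k : ℕ} (hk : k ≤ M) : 0 < upWeight β M k :=
  mul_pos (Nat.cast_pos.2 (Nat.choose_pos hk)) (exp_pos _)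

theorem upWeight_le_exp_mul_freeEnergy (β : ℝ) {M : ℕ} (hM : 0 < M) (k : ℕ) :
    upWeight β M k ≤ exp (M * freeEnergy β (magnetization M k)) := by
  rw [mul_freeEnergy_magnetization β hM, exp_add]
  exact mul_le_mul_of_nonneg_right (Nat.choose_le_exp_mul_binEntropy M k) (exp_pos _).le

theorem cwZ_eq_sum_upWeight (β : ℝ) (M : ℕ) :
    cwZ β M = ∑ k ∈ range (M + 1), upWeight β M k := by
  simpa [cwZ, cwWeight, upWeight] using
    sum_piFinset_pm_one M fun s => exp (β / (2 * M) * s ^ 2)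

theorem cwZ_pos (β : ℝ) (M : ℕ) : 0 < cwZ β M := by
  rw [cwZ_eq_sum_upWeight]
  exact sum_pos (fun k hk => upWeight_pos β (Nat.lt_succ_iff.1 (mem_range.1 hk)))
    nonempty_range_add_one

theorem exp_mul_freeEnergy_le_cwZ {β : ℝ} (hβ : 0 ≤ β) {M : ℕ} (hM : 0 < M) {a : ℝ}
    (ha : a ∈ Set.Ioo (-1) 1) : exp (M * freeEnergy β a) ≤ cwZ β M := by
  set p : ℝ := (1 + a) / 2 with hp_def
  have hp : p ∈ Set.Ioo 0 1 := ⟨by linarith [ha.1], by linarith [ha.2]⟩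
  set b : ℕ → ℝ := fun k => (bernsteinPolynomial ℝ M k).eval p
  have hb0 : ∀ k ∈ range (M + 1), 0 ≤ b k :=
    fun k _ => bernsteinPolynomial.eval_nonneg M k (Set.Ioo_subset_Icc_self hp)
  have hb1 : ∑ k ∈ range (M + 1), b k = 1 := bernsteinPolynomial.sum_eval M p
  have hbk : ∑ k ∈ range (M + 1), b k * k = M * p := bernsteinPolynomial.sum_eval_mul M p
  set G : ℕ → ℝ := fun k =>
    β / (2 * M) * (2 * k - M) ^ 2 - (k * log p + (M - k) * log (1 - p))
  have hweight : ∀ k ∈ range (M + 1), upWeight β M k = b k * exp (G k) := by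
    intro k hk
    simp only [b, G, bernsteinPolynomial.eval_eq, upWeight, mul_assoc,
      pow_mul_one_sub_pow_eq_exp (Nat.lt_succ_iff.1 (mem_range.1 hk)) hp, ← exp_add]
    ring_nf
  have hvar : (M * a) ^ 2 ≤ ∑ k ∈ range (M + 1), b k * (2 * k - M) ^ 2 := by
    have hmean : ∑ k ∈ range (M + 1), b k * (2 * k - M) = M * a := by
      simp only [mul_sub, sum_sub_distrib, ← sum_mul, hb1, mul_left_comm _ (2 : ℝ), ← mul_sum,
        hbk, hp_def]
      ring
    simpa [hmean] using (Even.convexOn_pow (𝕜 := ℝ) even_two).map_sum_le hb0 hb1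
      (p := fun k : ℕ => 2 * (k : ℝ) - M) (fun _ _ => Set.mem_univ _)
  have hmeanG : M * freeEnergy β a ≤ ∑ k ∈ range (M + 1), b k * G k := by
    have hM' : (M : ℝ) ≠ 0 := by positivity
    have hsum : ∑ k ∈ range (M + 1), b k * G k =
        β / (2 * M) * ∑ k ∈ range (M + 1), b k * (2 * k - M) ^ 2
          - log p * ∑ k ∈ range (M + 1), b k * k
          - log (1 - p) * (M * ∑ k ∈ range (M + 1), b k - ∑ k ∈ range (M + 1), b k * k) := by
      simp only [mul_sum, ← sum_sub_distrib]
      exact sum_congr rfl fun k _ => by ring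
    rw [hsum, hb1, hbk]
    calc M * freeEnergy β a
        = β / (2 * M) * (M * a) ^ 2 - log p * (M * p) - log (1 - p) * (M * 1 - M * p) := by
          rw [freeEnergy, ← hp_def, binEntropy, log_inv, log_inv]
          field_simp
          ring
      _ ≤ _ := by gcongr
  calc exp (M * freeEnergy β a) ≤ exp (∑ k ∈ range (M + 1), b k * G k) := exp_le_exp.2 hmeanG
    _ ≤ ∑ k ∈ range (M + 1), b k * exp (G k) :=
      convexOn_exp.map_sum_le hb0 hb1 (fun _ _ => Set.mem_univ _)
    _ = cwZ β M := by rw [cwZ_eq_sum_upWeight, sum_congr rfl hweight]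

theorem upProb_nonneg (β : ℝ) (M k : ℕ) : 0 ≤ upProb β M k :=
  div_nonneg (mul_nonneg (Nat.cast_nonneg _) (exp_pos _).le) (cwZ_pos β M).le

theorem sum_upProb (β : ℝ) (M : ℕ) : ∑ k ∈ range (M + 1), upProb β M k = 1 := by
  simp_rw [upProb, ← sum_div, ← cwZ_eq_sum_upWeight, div_self (cwZ_pos β M).ne']

theorem upProb_reflect (β : ℝ) {M k : ℕ} (hk : k ≤ M) : upProb β M (M - k) = upProb β M k := by
  rw [upProb, upProb, upWeight, upWeight, Nat.choose_symm hk, Nat.cast_sub hk]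
  ring_nf

theorem integral_comp_sum (β : ℝ) (M : ℕ) (g : ℝ → ℝ) :
    ∫ x, g (∑ i, x i) ∂curieWeiss β M = ∑ k ∈ range (M + 1), upProb β M k * g (2 * k - M) := by
  rw [curieWeiss, integral_finsetSum_measure fun x _ =>
    (integrable_dirac (by simp)).smul_measure ENNReal.ofReal_ne_top]
  simp only [integral_smul_measure, integral_dirac, smul_eq_mul, cwWeight,
    ENNReal.toReal_ofReal (div_nonneg (exp_pos _).le (cwZ_pos β M).le)]
  simpa [upProb, upWeight, mul_div_assoc, mul_assoc] using
    sum_piFinset_pm_one M fun s => exp (β / (2 * M) * s ^ 2) / cwZ β M * g s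

theorem sum_upProb_mul_symmetrize (β : ℝ) (M : ℕ) (g : ℝ → ℝ) :
    ∑ k ∈ range (M + 1), upProb β M k * g (magnetization M k) =
      ∑ k ∈ range (M + 1), upProb β M k *
        ((g |magnetization M k| + g (-|magnetization M k|)) / 2) := by
  have hreflect : ∑ k ∈ range (M + 1), upProb β M k * g (-magnetization M k) =
      ∑ k ∈ range (M + 1), upProb β M k * g (magnetization M k) := by
    rw [← sum_range_reflect]
    refine sum_congr rfl fun k hk => ?_
    have hk : k ≤ M := Nat.lt_succ_iff.1 (mem_range.1 hk)
    rw [Nat.add_sub_cancel, upProb_reflect β hk, magnetization_reflect hk, neg_neg]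
  have habs : ∀ t : ℝ, (g |t| + g (-|t|)) / 2 = (g t + g (-t)) / 2 := fun t => by
    rcases abs_choice t with h | h <;> rw [h]
    rw [neg_neg, add_comm]
  calc ∑ k ∈ range (M + 1), upProb β M k * g (magnetization M k)
      = (∑ k ∈ range (M + 1), upProb β M k * g (magnetization M k)
        + ∑ k ∈ range (M + 1), upProb β M k * g (-magnetization M k)) / 2 := by
        rw [hreflect]; ring
    _ = ∑ k ∈ range (M + 1), upProb β M k *
          ((g (magnetization M k) + g (-magnetization M k)) / 2) := by
        rw [← sum_add_distrib, sum_div]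
        exact sum_congr rfl fun k _ => by ring
    _ = _ := by simp only [habs]

theorem tendsto_sum_upProb_far {β : ℝ} (hβ : 0 ≤ β) {a : ℝ} (ha : a ∈ Set.Ico 0 1)
    (hmax : ∀ t ∈ Set.Icc 0 1, t ≠ a → freeEnergy β t < freeEnergy β a) {ε : ℝ}
    (hε : 0 < ε) :
    Tendsto (fun M : ℕ => ∑ k ∈ range (M + 1) with ε ≤ dist |magnetization M k| a,
      upProb β M k) atTop (𝓝 0) := by
  set K : Set ℝ := {t ∈ Set.Icc (-1) 1 | ε ≤ dist |t| a}
  have hK : IsCompact K := isCompact_Icc.inter_right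
    (isClosed_le continuous_const (continuous_abs.dist continuous_const))
  have hgap : ∀ t ∈ K, 0 < freeEnergy β a - freeEnergy β t := by
    rintro t ⟨ht, hta⟩
    rw [sub_pos, ← freeEnergy_abs]
    refine hmax |t| ⟨abs_nonneg t, abs_le.2 ht⟩ fun h => ?_
    rw [h, dist_self] at hta
    linarith
  obtain ⟨δ, hδ, hδK⟩ := hK.exists_forall_le' (by fun_prop) hgap
  refine squeeze_zero' (Eventually.of_forall fun M => sum_nonneg fun k _ => upProb_nonneg β M k)
    ?_ (tendsto_natCast_add_one_mul_exp_neg_mul hδ)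
  filter_upwards [eventually_gt_atTop 0] with M hM
  have hterm : ∀ k ∈ {k ∈ range (M + 1) | ε ≤ dist |magnetization M k| a},
      upProb β M k ≤ exp (-(M * δ)) := by
    intro k hk
    rw [mem_filter, mem_range, Nat.lt_succ_iff] at hk
    have hδk := hδK _ ⟨magnetization_mem_Icc hk.1, hk.2⟩
    calc upProb β M k
        ≤ exp (M * freeEnergy β (magnetization M k)) / exp (M * freeEnergy β a) :=
          div_le_div₀ (exp_pos _).le (upWeight_le_exp_mul_freeEnergy β hM k) (exp_pos _)
            (exp_mul_freeEnergy_le_cwZ hβ hM ⟨by linarith [ha.1], ha.2⟩)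
      _ = exp (-(M * (freeEnergy β a - freeEnergy β (magnetization M k)))) := by
          rw [← exp_sub]; ring_nf
      _ ≤ exp (-(M * δ)) := by gcongr
  calc ∑ k ∈ range (M + 1) with ε ≤ dist |magnetization M k| a, upProb β M k
      ≤ ∑ k ∈ range (M + 1) with ε ≤ dist |magnetization M k| a, exp (-(M * δ)) :=
        sum_le_sum hterm
    _ ≤ ∑ k ∈ range (M + 1), exp (-(M * δ)) :=
        sum_le_sum_of_subset_of_nonneg (filter_subset _ _) fun _ _ _ => (exp_pos _).le
    _ = (M + 1) * exp (-(M * δ)) := by simp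

theorem tendsto_integral {β : ℝ} (hβ : 0 ≤ β) {a : ℝ} (ha : a ∈ Set.Ico 0 1)
    (hmax : ∀ t ∈ Set.Icc 0 1, t ≠ a → freeEnergy β t < freeEnergy β a) (f : ℝ →ᵇ ℝ) :
    Tendsto (fun M : ℕ => ∫ x, f ((M : ℝ)⁻¹ * ∑ i, x i) ∂curieWeiss β M) atTop
      (𝓝 ((f a + f (-a)) / 2)) := by
  have hsymm : ∀ M : ℕ, ∫ x, f ((M : ℝ)⁻¹ * ∑ i, x i) ∂curieWeiss β M =
      ∑ k ∈ range (M + 1), upProb β M k *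
        ((f |magnetization M k| + f (-|magnetization M k|)) / 2) := fun M => by
    rw [integral_comp_sum β M fun s => f ((M : ℝ)⁻¹ * s), ← sum_upProb_mul_symmetrize]
    simp only [magnetization]
  have hbdd : ∀ y, |(f y + f (-y)) / 2| ≤ ‖f‖ := fun y => by
    have h₁ := f.norm_coe_le_norm y
    have h₂ := f.norm_coe_le_norm (-y)
    rw [Real.norm_eq_abs] at h₁ h₂
    rw [abs_div, abs_two, div_le_iff₀ two_pos]
    exact (abs_add_le _ _).trans (by linarith)
  refine (tendsto_congr hsymm).2 ?_
  exact tendsto_sum_mul_of_tendsto_sum_far (x := fun M k => |magnetization M k|)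
    (f := fun y => (f y + f (-y)) / 2) (fun M k _ => upProb_nonneg β M k) (sum_upProb β)
    (fun ε hε => tendsto_sum_upProb_far hβ ha hmax hε) (by fun_prop) hbdd

end CurieWeiss

/-- **Law of large numbers for Curie-Weiss variables.** If `ξ_1, …, ξ_M` are
`P_β^M`-distributed Curie-Weiss random variables, then the mean `(1/M) ∑ ξ_i` converges in
distribution, as `M → ∞`, to `δ_0` if `β ≤ 1` and to `(1/2)(δ_{−m(β)} + δ_{m(β)})` if
`β > 1`, where `m(β)` is the unique strictly positive solution of `tanh(βm) = m`. -/
theorem curieWeiss_law_of_large_numbers (β : ℝ) (hβ : 0 ≤ β) :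
    (1 < β → ∃! m : ℝ, 0 < m ∧ Real.tanh (β * m) = m) ∧
    (β ≤ 1 → ∀ f : ℝ →ᵇ ℝ,
      Tendsto (fun M : ℕ => ∫ x, f ((M : ℝ)⁻¹ * ∑ i, x i) ∂(curieWeiss β M))
        atTop (nhds (f 0))) ∧
    (1 < β → ∀ m : ℝ, 0 < m → Real.tanh (β * m) = m → ∀ f : ℝ →ᵇ ℝ,
      Tendsto (fun M : ℕ => ∫ x, f ((M : ℝ)⁻¹ * ∑ i, x i) ∂(curieWeiss β M))
        atTop (nhds ((f (-m) + f m) / 2))) := by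
  refine ⟨existsUnique_pos_tanh_mul_eq_self, fun hβ1 f => ?_, fun _ m hm hfix f => ?_⟩
  · simpa using CurieWeiss.tendsto_integral hβ ⟨le_rfl, one_pos⟩
      (fun t ht ht0 => CurieWeiss.freeEnergy_lt_freeEnergy_zero hβ1 ht ht0) f
  · have hm1 : m < 1 := hfix ▸ tanh_lt_one _
    have hfix' := (tanh_mul_eq_self_iff ⟨by linarith, hm1⟩).1 hfix
    rw [add_comm]
    exact CurieWeiss.tendsto_integral hβ ⟨hm.le, hm1⟩
      (fun t ht htm => CurieWeiss.freeEnergy_lt_freeEnergy_of_artanh_eq ⟨hm, hm1⟩ hfix' ht htm) f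
end

section
/- De Finetti-type representation for Curie-Weiss measures (Hubbard–Stratonovich). Fix β > 0 and M ∈ ℕ. For t ∈ [−1,1] let P_t^{(M)} be the M-fold product of the measure on {−1,1} giving mass (1+t)/2 to +1 and (1−t)/2 to −1, with expectation E_t, and set F_β(t) = (1/β)((1/2)·ln((1+t)/(1−t)))² + ln(1−t²) and w(t) = e^{−(M/2)·F_β(t)}/(1−t²) for t ∈ (−1,1). Then for every function φ on {−1,1}^M, the Curie-Weiss expectation satisfies E_β^M[φ(X_1, …, X_M)] = (∫_{−1}^{1} E_t[φ(X_1, …, X_M)] · w(t) dt) / (∫_{−1}^{1} w(t) dt). -/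
open MeasureTheory ProbabilityTheory Filter
open scoped BoundedContinuousFunction ENNReal

/-!
Substituting `t = tanh s` turns `(1 + t σ) / 2` into `e^{s σ} / (2 cosh s)` for `σ = ±1` and
`w(t) dt` into `e^{-M s² / (2β)} cosh^M s ds`, so the integrand becomes
`2^{-M} ∑_x φ(x) e^{s ∑ x_i - M s² / (2β)}`. The Gaussian integral
`∫ e^{b s - a s²} ds = √(π / a) e^{b² / (4a)}` (Hubbard–Stratonovich read backwards) turns each
summand into `e^{β (∑ x_i)² / (2M)} φ(x)` times a constant independent of `x`, and that constant
cancels against the denominator, which is the case `φ = 1`.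
-/

open Real

namespace Real

theorem hasDerivAt_tanh (x : ℝ) : HasDerivAt tanh (cosh x ^ 2)⁻¹ x := by
  have h := (hasDerivAt_sinh x).div (hasDerivAt_cosh x) (cosh_pos x).ne'
  rw [← sq, ← sq, cosh_sq_sub_sinh_sq, one_div] at h
  exact h.congr_of_eventuallyEq (.of_eq (funext tanh_eq_sinh_div_cosh))

theorem one_sub_tanh_sq (x : ℝ) : 1 - tanh x ^ 2 = (cosh x ^ 2)⁻¹ := by
  have := (cosh_pos x).ne'
  rw [tanh_eq_sinh_div_cosh, div_pow]
  field_simp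
  exact cosh_sq_sub_sinh_sq x

theorem one_add_tanh (x : ℝ) : 1 + tanh x = exp x / cosh x := by
  have := (cosh_pos x).ne'
  rw [tanh_eq_sinh_div_cosh, ← cosh_add_sinh x]
  field_simp

theorem one_sub_tanh (x : ℝ) : 1 - tanh x = exp (-x) / cosh x := by
  have := (cosh_pos x).ne'
  rw [tanh_eq_sinh_div_cosh, ← cosh_sub_sinh x]
  field_simp

theorem log_one_add_tanh_div_one_sub_tanh (x : ℝ) :
    log ((1 + tanh x) / (1 - tanh x)) = 2 * x := by
  rw [one_add_tanh, one_sub_tanh, div_div_div_cancel_right₀ (cosh_pos x).ne', ← exp_sub,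
    log_exp]
  ring

theorem intervalIntegral_neg_one_one_eq_integral_comp_tanh (g : ℝ → ℝ) :
    ∫ t in (-1 : ℝ)..1, g t = ∫ s, (cosh s ^ 2)⁻¹ * g (tanh s) := by
  rw [intervalIntegral.integral_of_le (by norm_num), integral_Ioc_eq_integral_Ioo,
    ← tanh_bijOn.image_eq, integral_image_eq_integral_abs_deriv_smul MeasurableSet.univ
      (fun x _ => (hasDerivAt_tanh x).hasDerivWithinAt) tanh_injective.injOn, setIntegral_univ]
  simp only [abs_of_pos (inv_pos.mpr (pow_pos (cosh_pos _) 2)), smul_eq_mul]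

end Real

theorem exp_mul_sub_mul_sq_eq {a : ℝ} (ha : 0 < a) (b s : ℝ) :
    exp (b * s - a * s ^ 2) = exp (-a * (s - b / (2 * a)) ^ 2) * exp (b ^ 2 / (4 * a)) := by
  rw [← exp_add]
  congr 1
  field_simp
  ring

theorem integrable_exp_mul_sub_mul_sq {a : ℝ} (ha : 0 < a) (b : ℝ) :
    Integrable fun s : ℝ => exp (b * s - a * s ^ 2) := by
  simp only [exp_mul_sub_mul_sq_eq ha]
  exact ((integrable_exp_neg_mul_sq ha).comp_sub_right _).mul_const _

theorem integral_exp_mul_sub_mul_sq {a : ℝ} (ha : 0 < a) (b : ℝ) :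
    ∫ s : ℝ, exp (b * s - a * s ^ 2) = √(π / a) * exp (b ^ 2 / (4 * a)) := by
  simp only [exp_mul_sub_mul_sq_eq ha]
  rw [integral_mul_const, integral_sub_right_eq_self (fun s => exp (-a * s ^ 2)),
    integral_gaussian]

section Spins

variable {ι : Type*} [Fintype ι] [DecidableEq ι]

noncomputable def productSpinExpectation (t : ℝ) (φ : (ι → ℝ) → ℝ) : ℝ :=
  ∑ x ∈ Fintype.piFinset (fun _ : ι => ({-1, 1} : Finset ℝ)), (∏ i, ((1 + t * x i) / 2)) * φ x

theorem productSpinExpectation_const_one (t : ℝ) :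
    productSpinExpectation t (fun _ : ι → ℝ => 1) = 1 := by
  simp only [productSpinExpectation, mul_one]
  rw [← Finset.prod_univ_sum (fun _ : ι => ({-1, 1} : Finset ℝ)) fun _ c => (1 + t * c) / 2]
  refine Finset.prod_eq_one fun _ _ => ?_
  rw [Finset.sum_pair (by norm_num)]
  ring

theorem one_add_tanh_mul_div_two_of_mem_pair {σ : ℝ} (hσ : σ ∈ ({-1, 1} : Finset ℝ)) (s : ℝ) :
    (1 + tanh s * σ) / 2 = exp (s * σ) / (2 * cosh s) := by
  simp only [Finset.mem_insert, Finset.mem_singleton] at hσ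
  rcases hσ with rfl | rfl
  · rw [mul_neg_one, ← sub_eq_add_neg, one_sub_tanh, mul_neg_one, div_div, mul_comm]
  · rw [mul_one, mul_one, one_add_tanh, div_div, mul_comm]

theorem prod_one_add_tanh_mul_div_two {x : ι → ℝ}
    (hx : x ∈ Fintype.piFinset fun _ : ι => ({-1, 1} : Finset ℝ)) (s : ℝ) :
    ∏ i, (1 + tanh s * x i) / 2 = exp (s * ∑ i, x i) / (2 * cosh s) ^ Fintype.card ι := by
  simp only [one_add_tanh_mul_div_two_of_mem_pair (Fintype.mem_piFinset.mp hx _),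
    Finset.prod_div_distrib, ← exp_sum, Finset.mul_sum, Finset.prod_const, Finset.card_univ]

end Spins

noncomputable def curieWeissMixingDensity (β : ℝ) (M : ℕ) (t : ℝ) : ℝ :=
  exp (-(M / 2) * ((1 / β) * ((1 / 2) * log ((1 + t) / (1 - t))) ^ 2 + log (1 - t ^ 2))) /
    (1 - t ^ 2)

theorem curieWeissMixingDensity_tanh (β : ℝ) (M : ℕ) (s : ℝ) :
    curieWeissMixingDensity β M (tanh s) = exp (-(M / (2 * β)) * s ^ 2) * cosh s ^ (M + 2) := by
  rw [curieWeissMixingDensity, log_one_add_tanh_div_one_sub_tanh, one_sub_tanh_sq, log_inv,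
    log_pow, show -((M : ℝ) / 2) * ((1 / β) * ((1 / 2) * (2 * s)) ^ 2 + -((2 : ℕ) * log (cosh s)))
      = -(M / (2 * β)) * s ^ 2 + M * log (cosh s) by push_cast; ring,
    exp_add, exp_nat_mul, exp_log (cosh_pos s)]
  field_simp
  ring

theorem inv_cosh_sq_mul_productSpinExpectation_mul_curieWeissMixingDensity_tanh
    (β : ℝ) (M : ℕ) (φ : (Fin M → ℝ) → ℝ) (s : ℝ) :
    (cosh s ^ 2)⁻¹ *
        (productSpinExpectation (tanh s) φ * curieWeissMixingDensity β M (tanh s)) =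
      ∑ x ∈ Fintype.piFinset (fun _ : Fin M => ({-1, 1} : Finset ℝ)),
        exp ((∑ i, x i) * s - M / (2 * β) * s ^ 2) / 2 ^ M * φ x := by
  have hc := (cosh_pos s).ne'
  rw [productSpinExpectation, Finset.sum_mul, Finset.mul_sum]
  refine Finset.sum_congr rfl fun x hx => ?_
  rw [prod_one_add_tanh_mul_div_two hx, curieWeissMixingDensity_tanh, Fintype.card_fin,
    sub_eq_add_neg, exp_add, ← neg_mul]
  field_simp
  ring

theorem integral_productSpinExpectation_mul_curieWeissMixingDensity
    {β : ℝ} (hβ : 0 < β) {M : ℕ} (hM : 0 < M) (φ : (Fin M → ℝ) → ℝ) :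
    ∫ t in (-1 : ℝ)..1, productSpinExpectation t φ * curieWeissMixingDensity β M t =
      √(π / (M / (2 * β))) / 2 ^ M *
        ∑ x ∈ Fintype.piFinset (fun _ : Fin M => ({-1, 1} : Finset ℝ)), cwWeight β M x * φ x := by
  have ha : 0 < (M : ℝ) / (2 * β) := by positivity
  simp only [intervalIntegral_neg_one_one_eq_integral_comp_tanh,
    inv_cosh_sq_mul_productSpinExpectation_mul_curieWeissMixingDensity_tanh]
  rw [integral_finsetSum _ fun x _ =>
    ((integrable_exp_mul_sub_mul_sq ha _).div_const _).mul_const _, Finset.mul_sum]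
  refine Finset.sum_congr rfl fun x _ => ?_
  rw [integral_mul_const, integral_div, integral_exp_mul_sub_mul_sq ha, cwWeight]
  field_simp
  ring_nf

/-- **De Finetti-type representation for Curie-Weiss measures (Hubbard–Stratonovich).**
For `β > 0`, `M ≥ 1` and any `φ : {-1,1}^M → ℝ`, the Curie-Weiss expectation
`E_β^M[φ]` equals `(∫_{-1}^1 E_t[φ] w(t) dt) / (∫_{-1}^1 w(t) dt)`, where `E_t` is the
expectation of the `M`-fold product of the measure on `{-1,1}` giving mass `(1±t)/2` to
`±1`, `w(t) = exp(−(M/2) F_β(t))/(1−t²)` and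
`F_β(t) = (1/β)((1/2) ln((1+t)/(1−t)))² + ln(1−t²)`. -/
theorem curieWeiss_deFinetti_representation (β : ℝ) (hβ : 0 < β) (M : ℕ) (hM : 0 < M)
    (φ : (Fin M → ℝ) → ℝ) :
    (∑ x ∈ Fintype.piFinset (fun _ : Fin M => ({-1, 1} : Finset ℝ)),
        cwWeight β M x * φ x) / cwZ β M =
      (∫ t in (-1 : ℝ)..1,
          (∑ x ∈ Fintype.piFinset (fun _ : Fin M => ({-1, 1} : Finset ℝ)),
            (∏ i, ((1 + t * x i) / 2)) * φ x) *
          (Real.exp (-(M / 2) *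
              ((1 / β) * ((1 / 2) * Real.log ((1 + t) / (1 - t))) ^ 2 +
                Real.log (1 - t ^ 2))) / (1 - t ^ 2))) /
      (∫ t in (-1 : ℝ)..1,
          Real.exp (-(M / 2) *
              ((1 / β) * ((1 / 2) * Real.log ((1 + t) / (1 - t))) ^ 2 +
                Real.log (1 - t ^ 2))) / (1 - t ^ 2)) := by
  change _ = (∫ t in (-1 : ℝ)..1, productSpinExpectation t φ * curieWeissMixingDensity β M t) /
    ∫ t in (-1 : ℝ)..1, curieWeissMixingDensity β M t
  have hnorm : ∫ t in (-1 : ℝ)..1, curieWeissMixingDensity β M t =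
      ∫ t in (-1 : ℝ)..1,
        productSpinExpectation t (fun _ : Fin M → ℝ => 1) * curieWeissMixingDensity β M t := by
    simp only [productSpinExpectation_const_one, one_mul]
  have hconst : √(π / (M / (2 * β))) / 2 ^ M ≠ 0 := by positivity
  rw [hnorm, integral_productSpinExpectation_mul_curieWeissMixingDensity hβ hM,
    integral_productSpinExpectation_mul_curieWeissMixingDensity hβ hM, mul_div_mul_left _ _ hconst]
  simp only [mul_one, cwZ]
end
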